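/- Let v'_1,…,v'_r be unit vectors in a Hilbert space with |⟨v'_i, v'_j⟩| ≤ δ for all i ≠ j, where 0 < δ ≤ 1/(16r). Let v_1,…,v_r be the vectors obtained by Gram–Schmidt orthonormalising v'_1,…,v'_r. Then for every i, ‖v_i − v'_i‖ ≤ δ√(32(i−1)). -/

import Mathlib

/-! Write `u` for the normalised and `G` for the unnormalised Gram–Schmidt vectors. Then
`v i = G i + p` with `p = ∑ k < i, ⟪u k, v i⟫ • u k` orthogonal to `G i`, so
`‖p‖² = re ⟪p, v i⟫ = ∑ k < i, ‖⟪u k, v i⟫‖²`, and for a unit vector `v i`,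
`‖u i - v i‖² ≤ 2 - 2‖G i‖ ≤ 2 (1 - ‖G i‖²) = 2‖p‖²`.
So it suffices that `‖⟪u k, v j⟫‖ ≤ 2δ` for `k < j`, which holds by strong induction on `k`:
`⟪G k, v j⟫ = ⟪v k, v j⟫ - ⟪p, v j⟫` has norm at most `δ + 4kδ² ≤ 5δ/4`, while
`‖G k‖² = 1 - ‖p‖² ≥ 1 - 4kδ²` keeps the normalisation harmless. -/

open Finset InnerProductSpace
open scoped InnerProductSpace

section GramSchmidt

variable {𝕜 E ι : Type*} [RCLike 𝕜] [NormedAddCommGroup E] [InnerProductSpace 𝕜 E]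
  [LinearOrder ι] [LocallyFiniteOrderBot ι] [WellFoundedLT ι]

theorem inner_gramSchmidtNormed_left (f : ι → E) (n : ι) (x : E) :
    ⟪gramSchmidtNormed 𝕜 f n, x⟫_𝕜 = (‖gramSchmidt 𝕜 f n‖ : 𝕜)⁻¹ * ⟪gramSchmidt 𝕜 f n, x⟫_𝕜 := by
  rw [gramSchmidtNormed, inner_smul_left, map_inv₀, RCLike.conj_ofReal]

theorem norm_inner_gramSchmidtNormed_left (f : ι → E) (n : ι) (x : E) :
    ‖⟪gramSchmidtNormed 𝕜 f n, x⟫_𝕜‖ = ‖⟪gramSchmidt 𝕜 f n, x⟫_𝕜‖ / ‖gramSchmidt 𝕜 f n‖ := by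
  rw [inner_gramSchmidtNormed_left, norm_mul, norm_inv, RCLike.norm_ofReal, abs_norm,
    inv_mul_eq_div]

theorem inner_gramSchmidtNormed_gramSchmidt (f : ι → E) {a b : ι} (h : a ≠ b) :
    ⟪gramSchmidtNormed 𝕜 f a, gramSchmidt 𝕜 f b⟫_𝕜 = 0 := by
  rw [inner_gramSchmidtNormed_left, gramSchmidt_orthogonal 𝕜 f h, mul_zero]

theorem norm_gramSchmidtNormed_le_one (f : ι → E) (n : ι) : ‖gramSchmidtNormed 𝕜 f n‖ ≤ 1 := by
  by_cases h : gramSchmidt 𝕜 f n = 0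
  · simp [gramSchmidtNormed, h]
  · rw [gramSchmidtNormed, norm_smul_inv_norm h]

theorem sub_gramSchmidt_eq_sum_inner_smul (f : ι → E) (n : ι) :
    f n - gramSchmidt 𝕜 f n =
      ∑ k ∈ Iio n, ⟪gramSchmidtNormed 𝕜 f k, f n⟫_𝕜 • gramSchmidtNormed 𝕜 f k := by
  rw [gramSchmidt_def 𝕜 f n, sub_sub_cancel]
  refine sum_congr rfl fun k _ => ?_
  rw [Submodule.starProjection_singleton, inner_gramSchmidtNormed_left, gramSchmidtNormed,
    smul_smul]
  congr 1
  push_cast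
  ring

theorem inner_sub_gramSchmidt_gramSchmidt (f : ι → E) (n : ι) :
    ⟪f n - gramSchmidt 𝕜 f n, gramSchmidt 𝕜 f n⟫_𝕜 = 0 := by
  rw [sub_gramSchmidt_eq_sum_inner_smul, sum_inner]
  refine sum_eq_zero fun k hk => ?_
  rw [inner_smul_left, inner_gramSchmidtNormed_gramSchmidt f (mem_Iio.mp hk).ne, mul_zero]

theorem norm_gramSchmidt_sq (f : ι → E) (n : ι) :
    ‖gramSchmidt 𝕜 f n‖ ^ 2 = ‖f n‖ ^ 2 - ‖f n - gramSchmidt 𝕜 f n‖ ^ 2 := by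
  have h := norm_add_sq_eq_norm_sq_add_norm_sq_of_inner_eq_zero (𝕜 := 𝕜) _ _
    (inner_sub_gramSchmidt_gramSchmidt f n)
  rw [sub_add_cancel] at h
  linarith

theorem norm_sub_gramSchmidt_sq_eq_re_inner (f : ι → E) (n : ι) :
    ‖f n - gramSchmidt 𝕜 f n‖ ^ 2 = RCLike.re ⟪f n - gramSchmidt 𝕜 f n, f n⟫_𝕜 := by
  rw [← inner_self_eq_norm_sq (𝕜 := 𝕜), inner_sub_right (f n - gramSchmidt 𝕜 f n),
    inner_sub_gramSchmidt_gramSchmidt, sub_zero]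

theorem norm_inner_sub_gramSchmidt_le (f : ι → E) (n : ι) (x : E) {ε ε' : ℝ}
    (hf : ∀ k < n, ‖⟪gramSchmidtNormed 𝕜 f k, f n⟫_𝕜‖ ≤ ε)
    (hx : ∀ k < n, ‖⟪gramSchmidtNormed 𝕜 f k, x⟫_𝕜‖ ≤ ε') :
    ‖⟪f n - gramSchmidt 𝕜 f n, x⟫_𝕜‖ ≤ #(Iio n) * (ε * ε') := by
  rw [sub_gramSchmidt_eq_sum_inner_smul, sum_inner, ← nsmul_eq_mul]
  refine (norm_sum_le _ _).trans (sum_le_card_nsmul _ _ _ fun k hk => ?_)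
  rw [inner_smul_left, norm_mul, RCLike.norm_conj]
  have hfk := hf k (mem_Iio.mp hk)
  exact mul_le_mul hfk (hx k (mem_Iio.mp hk)) (norm_nonneg _) ((norm_nonneg _).trans hfk)

theorem inner_gramSchmidtNormed_eq_norm_gramSchmidt (f : ι → E) (n : ι) :
    ⟪gramSchmidtNormed 𝕜 f n, f n⟫_𝕜 = ‖gramSchmidt 𝕜 f n‖ := by
  have h : ⟪gramSchmidt 𝕜 f n, f n - gramSchmidt 𝕜 f n⟫_𝕜 = 0 :=
    inner_eq_zero_symm.mp (inner_sub_gramSchmidt_gramSchmidt f n)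
  rw [inner_sub_right, sub_eq_zero, inner_self_eq_norm_sq_to_K] at h
  rw [inner_gramSchmidtNormed_left, h, sq, ← mul_assoc, inv_mul_mul_self]

theorem norm_sub_gramSchmidt_sq_le (f : ι → E) (n : ι) {ε : ℝ}
    (hf : ∀ k < n, ‖⟪gramSchmidtNormed 𝕜 f k, f n⟫_𝕜‖ ≤ ε) :
    ‖f n - gramSchmidt 𝕜 f n‖ ^ 2 ≤ #(Iio n) * (ε * ε) := by
  rw [norm_sub_gramSchmidt_sq_eq_re_inner]
  exact (RCLike.re_le_norm _).trans (norm_inner_sub_gramSchmidt_le f n (f n) hf hf)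

theorem norm_gramSchmidtNormed_sub_sq_le (f : ι → E) (n : ι) (hf : ‖f n‖ = 1) :
    ‖gramSchmidtNormed 𝕜 f n - f n‖ ^ 2 ≤ 2 * ‖f n - gramSchmidt 𝕜 f n‖ ^ 2 := by
  have hu := norm_gramSchmidtNormed_le_one (𝕜 := 𝕜) f n
  have hg := norm_gramSchmidt_sq (𝕜 := 𝕜) f n
  rw [hf, one_pow] at hg
  have hg1 : ‖gramSchmidt 𝕜 f n‖ ≤ 1 := by
    nlinarith [norm_nonneg (gramSchmidt 𝕜 f n), sq_nonneg ‖f n - gramSchmidt 𝕜 f n‖]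
  rw [norm_sub_sq (𝕜 := 𝕜), inner_gramSchmidtNormed_eq_norm_gramSchmidt, RCLike.ofReal_re, hf]
  nlinarith [norm_nonneg (gramSchmidtNormed 𝕜 f n), norm_nonneg (gramSchmidt 𝕜 f n)]

end GramSchmidt

section AlmostOrthonormal

variable {𝕜 E ι : Type*} [RCLike 𝕜] [NormedAddCommGroup E] [InnerProductSpace 𝕜 E]
  [LinearOrder ι] [LocallyFiniteOrderBot ι] [WellFoundedLT ι] {v : ι → E} {δ : ℝ}

theorem norm_inner_gramSchmidtNormed_le (hunit : ∀ i, ‖v i‖ = 1)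
    (hinner : ∀ i j, i ≠ j → ‖⟪v i, v j⟫_𝕜‖ ≤ δ)
    (hδ : ∀ i : ι, 16 * ((#(Iio i) : ℝ) + 1) * δ ≤ 1)
    {i j : ι} (hij : i < j) : ‖⟪gramSchmidtNormed 𝕜 v i, v j⟫_𝕜‖ ≤ 2 * δ := by
  induction i using WellFoundedLT.induction generalizing j with
  | _ i ih =>
  set n : ℝ := ((#(Iio i) : ℕ) : ℝ)
  set g := ‖gramSchmidt 𝕜 v i‖
  have hδ0 : 0 ≤ δ := (norm_nonneg _).trans (hinner i j hij.ne)
  have hP := norm_sub_gramSchmidt_sq_le v i fun k hk => ih k hk hk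
  have hg : g ^ 2 = 1 - ‖v i - gramSchmidt 𝕜 v i‖ ^ 2 := by
    rw [norm_gramSchmidt_sq, hunit, one_pow]
  have hGj : ‖⟪gramSchmidt 𝕜 v i, v j⟫_𝕜‖ ≤ δ + n * (2 * δ * (2 * δ)) :=
    calc ‖⟪gramSchmidt 𝕜 v i, v j⟫_𝕜‖
        = ‖⟪v i, v j⟫_𝕜 - ⟪v i - gramSchmidt 𝕜 v i, v j⟫_𝕜‖ := by
          rw [inner_sub_left, sub_sub_cancel]
      _ ≤ ‖⟪v i, v j⟫_𝕜‖ + ‖⟪v i - gramSchmidt 𝕜 v i, v j⟫_𝕜‖ := norm_sub_le _ _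
      _ ≤ δ + n * (2 * δ * (2 * δ)) :=
          add_le_add (hinner i j hij.ne) (norm_inner_sub_gramSchmidt_le v i (v j)
            (fun k hk => ih k hk hk) fun k hk => ih k hk (hk.trans hij))
  have hn : n * (2 * δ * (2 * δ)) ≤ δ / 4 := by nlinarith [hδ i]
  have hδ1 : δ ≤ 1 / 16 := by nlinarith [hδ i]
  have hg_ge : 1 - δ / 4 ≤ g := by
    nlinarith [norm_nonneg (gramSchmidt 𝕜 v i), sq_nonneg ‖v i - gramSchmidt 𝕜 v i‖]
  rw [norm_inner_gramSchmidtNormed_left, div_le_iff₀ (by linarith)]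
  nlinarith [mul_le_mul_of_nonneg_left hg_ge hδ0]

theorem norm_gramSchmidtNormed_sub_le (hunit : ∀ i, ‖v i‖ = 1)
    (hinner : ∀ i j, i ≠ j → ‖⟪v i, v j⟫_𝕜‖ ≤ δ) (hδ0 : 0 ≤ δ)
    (hδ : ∀ i : ι, 16 * ((#(Iio i) : ℝ) + 1) * δ ≤ 1) (i : ι) :
    ‖gramSchmidtNormed 𝕜 v i - v i‖ ≤ δ * √(8 * #(Iio i)) := by
  have hP := norm_sub_gramSchmidt_sq_le v i fun k hk =>
    norm_inner_gramSchmidtNormed_le hunit hinner hδ hk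
  have h := norm_gramSchmidtNormed_sub_sq_le (𝕜 := 𝕜) v i (hunit i)
  calc ‖gramSchmidtNormed 𝕜 v i - v i‖ ≤ √(δ ^ 2 * (8 * #(Iio i))) :=
        Real.le_sqrt_of_sq_le (by linarith)
    _ = δ * √(8 * #(Iio i)) := by rw [Real.sqrt_mul (sq_nonneg δ), Real.sqrt_sq hδ0]

end AlmostOrthonormal

theorem stmt1 {E : Type*} [NormedAddCommGroup E] [InnerProductSpace ℂ E]
    (r : ℕ) (v' : Fin r → E) (δ : ℝ) (hδ0 : 0 < δ) (hδ : δ ≤ 1 / (16 * r))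
    (hunit : ∀ i, ‖v' i‖ = 1)
    (hinner : ∀ i j, i ≠ j → ‖(inner ℂ (v' i) (v' j) : ℂ)‖ ≤ δ) :
    ∀ i : Fin r,
      ‖(@InnerProductSpace.gramSchmidtNormed ℂ E _ _ _ (Fin r) _ inferInstance
          (inferInstance : WellFoundedLT (Fin r)) v') i - v' i‖
        ≤ δ * Real.sqrt (32 * (i : ℝ)) := by
  intro i
  have hδr : ∀ k : Fin r, 16 * ((#(Iio k) : ℝ) + 1) * δ ≤ 1 := fun k => by
    have hk : (k : ℝ) + 1 ≤ r := by exact_mod_cast k.isLt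
    rw [le_div_iff₀ (by linarith)] at hδ
    rw [Fin.card_Iio]
    nlinarith
  refine (norm_gramSchmidtNormed_sub_le hunit hinner hδ0.le hδr i).trans ?_
  rw [Fin.card_Iio]
  gcongr
  norm_num
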